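/- arXiv:1905.12447 — 3 statements merged into one kernel-verified Lean document; each statement's English description precedes it below -/
import Mathlib

section
/- Let k ≥ 1, 0 < s₀ ≤ 1, and let α: I_k|_{[0,s₀]} → M_r(ℂ) be a unital homomorphism. Let α̃ be the composition C[0,s₀] → I_k|_{[0,s₀]} → M_r(ℂ), where the first map is g ↦ g·1_k. Then the multiplicity of 0 in Sp α̃ is congruent to r modulo k; in particular #(Sp α̃ ∩ {0}) ≡ r (mod k). -/
noncomputable section

open scoped Matrix.Norms.L2Operator Kronecker
open Matrix

/-- `n × n` complex matrices, endowed (via the scoped `Matrix.L2OpNorm` instances)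
with the operator norm, i.e. regarded as a C*-algebra. -/
abbrev Mat (n : ℕ) : Type := Matrix (Fin n) (Fin n) ℂ

/-- `(l·k) × (l·k)` complex matrices, indexed by pairs. -/
abbrev MatP (l k : ℕ) : Type := Matrix (Fin l × Fin k) (Fin l × Fin k) ℂ

/-- A projection in a `*`-algebra: a self-adjoint idempotent. -/
def IsProj' {A : Type*} [Mul A] [Star A] (p : A) : Prop := p * p = p ∧ star p = p

/-- The Elliott dimension drop interval algebra `I_k`, realized as the star subalgebra of
`C([0,1], M_k(ℂ))` of functions which are scalar multiples of `1_k` at both endpoints. -/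
def dimDrop (k : ℕ) : StarSubalgebra ℂ C(unitInterval, Mat k) where
  carrier := {f | (∃ c : ℂ, f 0 = c • (1 : Mat k)) ∧ (∃ c : ℂ, f 1 = c • (1 : Mat k))}
  mul_mem' := by
    rintro f g ⟨⟨c, hc⟩, ⟨d, hd⟩⟩ ⟨⟨c', hc'⟩, ⟨d', hd'⟩⟩
    refine ⟨⟨c * c', ?_⟩, ⟨d * d', ?_⟩⟩ <;>
      simp [hc, hd, hc', hd', smul_smul, smul_mul_assoc, mul_smul_comm, mul_comm]
  one_mem' := ⟨⟨1, by simp⟩, ⟨1, by simp⟩⟩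
  add_mem' := by
    rintro f g ⟨⟨c, hc⟩, ⟨d, hd⟩⟩ ⟨⟨c', hc'⟩, ⟨d', hd'⟩⟩
    exact ⟨⟨c + c', by simp [hc, hc', add_smul]⟩, ⟨d + d', by simp [hd, hd', add_smul]⟩⟩
  zero_mem' := ⟨⟨0, by simp⟩, ⟨0, by simp⟩⟩
  algebraMap_mem' := fun r =>
    ⟨⟨r, by simp [Algebra.algebraMap_eq_smul_one]⟩, ⟨r, by simp [Algebra.algebraMap_eq_smul_one]⟩⟩
  star_mem' := by
    rintro f ⟨⟨c, hc⟩, ⟨d, hd⟩⟩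
    exact ⟨⟨starRingEnd ℂ c, by simp [hc]⟩, ⟨starRingEnd ℂ d, by simp [hd]⟩⟩

/-- The scalar value of `f ∈ I_k` at an endpoint (`f(0̲)` resp. `f(1̲)`), recovered via the
normalized trace. -/
def scalarAt {k : ℕ} (f : ↥(dimDrop k)) (t : unitInterval) : ℂ :=
  Matrix.trace ((f : C(unitInterval, Mat k)) t) / (k : ℂ)

/-- The canonical unital inclusion `C[0,1] → I_k`, `g ↦ g · 1_k`. -/
def scalarEmb (k : ℕ) (g : C(unitInterval, ℂ)) : ↥(dimDrop k) :=
  ⟨⟨fun t => g t • (1 : Mat k), (map_continuous g).smul continuous_const⟩,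
   ⟨⟨g 0, rfl⟩, ⟨g 1, rfl⟩⟩⟩

/-- The algebra `I_k|_{[0,s₀]}`: continuous `M_k(ℂ)`-valued functions on `[0, s₀]` that are a
scalar multiple of `1_k` at `0`. -/
def dimDropZero (k : ℕ) {s₀ : ℝ} (hs : 0 ≤ s₀) :
    StarSubalgebra ℂ C(↥(Set.Icc (0:ℝ) s₀), Mat k) where
  carrier := {f | ∃ c : ℂ, f ⟨0, Set.left_mem_Icc.2 hs⟩ = c • (1 : Mat k)}
  mul_mem' := by
    rintro f g ⟨c, hc⟩ ⟨c', hc'⟩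
    exact ⟨c * c', by simp [hc, hc', smul_smul, smul_mul_assoc, mul_smul_comm, mul_comm]⟩
  one_mem' := ⟨1, by simp⟩
  add_mem' := by
    rintro f g ⟨c, hc⟩ ⟨c', hc'⟩
    exact ⟨c + c', by simp [hc, hc', add_smul]⟩
  zero_mem' := ⟨0, by simp⟩
  algebraMap_mem' := fun r => ⟨r, by simp [Algebra.algebraMap_eq_smul_one]⟩
  star_mem' := by
    rintro f ⟨c, hc⟩
    exact ⟨starRingEnd ℂ c, by simp [hc]⟩

/-- The scalar value `f(0̲)` for `f ∈ I_k|_{[0,s₀]}`, recovered via the normalized trace. -/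
def scalarAtZero {k : ℕ} {s₀ : ℝ} {hs : 0 ≤ s₀} (f : ↥(dimDropZero k hs)) : ℂ :=
  Matrix.trace ((f : C(↥(Set.Icc (0:ℝ) s₀), Mat k)) ⟨0, Set.left_mem_Icc.2 hs⟩) / (k : ℂ)

/-- The canonical unital inclusion `C[0,s₀] → I_k|_{[0,s₀]}`, `g ↦ g · 1_k`. -/
def scalarEmbZero (k : ℕ) {s₀ : ℝ} (hs : 0 ≤ s₀) (g : C(↥(Set.Icc (0:ℝ) s₀), ℂ)) :
    ↥(dimDropZero k hs) :=
  ⟨⟨fun t => g t • (1 : Mat k), (map_continuous g).smul continuous_const⟩,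
   ⟨g ⟨0, Set.left_mem_Icc.2 hs⟩, rfl⟩⟩

/-- The block-scalar matrix `a ⊗ 1_k ∈ M_l(ℂ) ⊗ M_k(ℂ) = M_{lk}(ℂ)`. -/
def blockScalar (l k : ℕ) (a : Matrix (Fin l) (Fin l) ℂ) : MatP l k :=
  a ⊗ₖ (1 : Mat k)

lemma blockScalar_mul (l k : ℕ) (a b : Matrix (Fin l) (Fin l) ℂ) :
    blockScalar l k a * blockScalar l k b = blockScalar l k (a * b) := by
  unfold blockScalar
  rw [← Matrix.mul_kronecker_mul, Matrix.one_mul]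

lemma star_blockScalar (l k : ℕ) (a : Matrix (Fin l) (Fin l) ℂ) :
    star (blockScalar l k a) = blockScalar l k (star a) := by
  show (blockScalar l k a)ᴴ = blockScalar l k aᴴ
  ext ⟨i, s⟩ ⟨j, t⟩
  by_cases h : s = t <;>
    simp [blockScalar, Matrix.conjTranspose_apply, Matrix.one_apply, h, eq_comm]

/-- The algebra `M_l(I_k)`, realized as the star subalgebra of `C([0,1], M_{lk}(ℂ))` of
functions whose values at `0` and at `1` are of the form `a ⊗ 1_k` with `a ∈ M_l(ℂ)`. -/
def dimDropMat (l k : ℕ) : StarSubalgebra ℂ C(unitInterval, MatP l k) where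
  carrier := {f | (∃ a, f 0 = blockScalar l k a) ∧ (∃ a, f 1 = blockScalar l k a)}
  mul_mem' := by
    rintro f g ⟨⟨a, ha⟩, ⟨b, hb⟩⟩ ⟨⟨a', ha'⟩, ⟨b', hb'⟩⟩
    refine ⟨⟨a * a', ?_⟩, ⟨b * b', ?_⟩⟩ <;>
      simp [ha, hb, ha', hb', blockScalar_mul]
  one_mem' := ⟨⟨1, by simp [blockScalar, Matrix.one_kronecker_one]⟩,
    ⟨1, by simp [blockScalar, Matrix.one_kronecker_one]⟩⟩
  add_mem' := by
    rintro f g ⟨⟨a, ha⟩, ⟨b, hb⟩⟩ ⟨⟨a', ha'⟩, ⟨b', hb'⟩⟩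
    exact ⟨⟨a + a', by simp [ha, ha', blockScalar, Matrix.add_kronecker]⟩,
      ⟨b + b', by simp [hb, hb', blockScalar, Matrix.add_kronecker]⟩⟩
  zero_mem' := ⟨⟨0, by simp [blockScalar, Matrix.zero_kronecker]⟩,
    ⟨0, by simp [blockScalar, Matrix.zero_kronecker]⟩⟩
  algebraMap_mem' := fun r =>
    ⟨⟨r • 1, by simp [blockScalar, Matrix.smul_kronecker, Matrix.one_kronecker_one,
        Algebra.algebraMap_eq_smul_one]⟩,
     ⟨r • 1, by simp [blockScalar, Matrix.smul_kronecker, Matrix.one_kronecker_one,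
        Algebra.algebraMap_eq_smul_one]⟩⟩
  star_mem' := by
    rintro f ⟨⟨a, ha⟩, ⟨b, hb⟩⟩
    exact ⟨⟨star a, by simp [ha, ← star_blockScalar]⟩,
      ⟨star b, by simp [hb, ← star_blockScalar]⟩⟩

/-- `β` is simultaneously diagonalized by a unitary `u`, with spectrum the family `x`
(with multiplicity): `β g = u · diag(g(x i)) · u*` for all `g`. -/
def DiagRep {Z : Type*} [TopologicalSpace Z] {ι : Type*} [Fintype ι] [DecidableEq ι]
    (β : C(Z, ℂ) → Matrix ι ι ℂ) (x : ι → Z) : Prop :=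
  ∃ u ∈ unitary (Matrix ι ι ℂ), ∀ g : C(Z, ℂ),
    β g = u * Matrix.diagonal (fun i => g (x i)) * star u

/-- `β` is represented at a point of the corner algebra `P M_N(ℂ) P` with spectrum `t` and
mutually orthogonal rank-one projections `p` summing to `P`. -/
def CornerRep {Z : Type*} [TopologicalSpace Z] {N n : ℕ}
    (β : C(Z, ℂ) → Mat N) (P : Mat N) (t : Fin n → Z) (p : Fin n → Mat N) : Prop :=
  (∀ i, IsProj' (p i) ∧ (p i).rank = 1) ∧
  (Pairwise fun i j => p i * p j = 0) ∧
  (∑ i, p i) = P ∧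
  ∀ g : C(Z, ℂ), β g = ∑ i, g (t i) • p i

/-- Two `ι`-indexed families of points of a metric space can be paired within `η`. -/
def PairedWithin {α : Type*} [PseudoMetricSpace α] {ι : Type*} (x y : ι → α) (η : ℝ) : Prop :=
  ∃ σ : Equiv.Perm ι, ∀ i, dist (x i) (y (σ i)) < η

/-- `X` is (homeomorphic to) the underlying space of a finite simplicial complex. -/
def FinComplex (X : Type*) [TopologicalSpace X] : Prop :=
  ∃ (d : ℕ) (K : Geometry.SimplicialComplex ℝ (EuclideanSpace ℝ (Fin d))),
    K.faces.Finite ∧ Nonempty (X ≃ₜ ↥K.space)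

/-- `X` is (homeomorphic to) the underlying space of a finite simplicial complex of
dimension at most `m`. -/
def FinComplexDim (X : Type*) [TopologicalSpace X] (m : ℕ) : Prop :=
  ∃ (d : ℕ) (K : Geometry.SimplicialComplex ℝ (EuclideanSpace ℝ (Fin d))),
    K.faces.Finite ∧ (∀ s ∈ K.faces, s.card ≤ m + 1) ∧ Nonempty (X ≃ₜ ↥K.space)

/-- The continuous inclusion of a subset into a larger subset. -/
def setIncl {α : Type*} [TopologicalSpace α] {s t : Set α} (h : s ⊆ t) : C(↥s, ↥t) :=
  ⟨fun x => ⟨x.1, h x.2⟩, (continuous_subtype_val).subtype_mk _⟩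

/-- A tracial state on a complex star algebra. -/
def IsTracialState {A : Type*} [Ring A] [Algebra ℂ A] [StarRing A] (τ : A →ₗ[ℂ] ℂ) : Prop :=
  τ 1 = 1 ∧ (∀ a, 0 ≤ (τ (star a * a)).re ∧ (τ (star a * a)).im = 0) ∧
    ∀ a b, τ (a * b) = τ (b * a)

/-- The complexification `C(X, ℝ) → C(X, ℂ)` (identification `Aff T C(X) = C_ℝ(X)`). -/
def toComplexC {X : Type*} [TopologicalSpace X] (h : C(X, ℝ)) : C(X, ℂ) :=
  ⟨fun x => (h x : ℂ), Complex.continuous_ofReal.comp h.continuous⟩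

/-- The spectral distribution property `sdp(η₀, δ)` for a unital homomorphism
`φ : C(X) → M_K(I_k)`: at every point `y` of the spectrum of `M_K(I_k)`, every open
`η₀`-ball in `X` catches at least the fraction `δ` of `Sp φ_y` (counted with multiplicity,
as a homomorphism into `M_{Kk}(C[0,1])`). -/
def HasSdpMat {X : Type*} [MetricSpace X] {K k : ℕ}
    (φ : C(X, ℂ) →⋆ₐ[ℂ] ↥(dimDropMat K k)) (η₀ δ : ℝ) : Prop :=
  ∀ (x₀ : X) (y : unitInterval) (x : Fin K × Fin k → X),
    DiagRep (fun f => (φ f : C(unitInterval, MatP K k)) y) x →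
    δ * (K * k) ≤ ((Finset.univ.filter fun q => dist (x q) x₀ < η₀).card : ℝ)

/-- The 1-skeleton of a simplicial complex. -/
def oneSkeleton {E : Type*} [AddCommGroup E] [Module ℝ E]
    (K : Geometry.SimplicialComplex ℝ E) : Set E :=
  ⋃ s ∈ {s ∈ K.faces | s.card ≤ 2}, convexHull ℝ (s : Set E)

/-- The index grouping used to describe the multiset
`Θ(y) = {a₁(y)^{∼l₂k}, …, a_{l₁-1}(y)^{∼l₂k}, a_{l₁}(y)^{∼(l₂+r)k}}`. -/
def groupIdx (l₁ l₂ r : ℕ) (h : 0 < l₁) (i : Fin (l₁ * l₂ + r)) : Fin l₁ :=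
  ⟨min ((i : ℕ) / l₂) (l₁ - 1), lt_of_le_of_lt (min_le_right _ _) (Nat.sub_lt h Nat.one_pos)⟩

instance : CompactSpace ↥(Metric.closedBall (0:ℂ) 1) :=
  isCompact_iff_compactSpace.mp (isCompact_closedBall _ _)

/-! Let `g·e_ij ∈ I_k|_{[0,s₀]}` (`g(0) = 0`) be the matrix units twisted by functions vanishing
at `0`. Writing `g₁g₂·e_ii = (g₁·e_ij)(g₂·e_ji)` and using `tr(ab) = tr(ba)`, all traces
`tr α(g₁g₂·e_ii)` agree, so `k · tr α(g₁g₂·e_00) = tr α̃(g₁g₂)`, and the latter is the sum of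
`g₁g₂` over `Sp α̃`. Choose `w` with `w(0) = 0` and `w = 1` at the nonzero points of `Sp α̃`.
Then `B = α((w - w²)·e_00)` has `k · tr(B*B) = ∑ |w - w²|² = 0` over `Sp α̃`, so `B = 0` and
`α(w·e_00)` is an idempotent with integer trace `n`; hence the number of nonzero points of
`Sp α̃` is `k n`. That `Sp α̃` exists at all follows by diagonalising `α̃(t ↦ t)` and
Stone–Weierstrass. -/

theorem Matrix.exists_trace_eq_natCast_of_isIdempotentElem {n K : Type*} [Fintype n]
    [DecidableEq n] [Field K] {P : Matrix n n K} (hP : IsIdempotentElem P) :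
    ∃ m : ℕ, P.trace = m := by
  have hP' : IsIdempotentElem (Matrix.toLin' P) := hP.map Matrix.toLinAlgEquiv'
  exact ⟨_, by
    rw [← Matrix.trace_toLin'_eq, ((LinearMap.isProj_range_iff_isIdempotentElem _).2 hP').trace]⟩

theorem exists_continuousMap_eq_zero_eqOn_one {X : Type*} [TopologicalSpace X] [NormalSpace X]
    [T1Space X] {s : Set X} (hs : s.Finite) {x₀ : X} (hx₀ : x₀ ∉ s) :
    ∃ w : C(X, ℂ), w x₀ = 0 ∧ Set.EqOn w 1 s := by
  obtain ⟨w, hw₀, hw₁, -⟩ := exists_continuous_zero_one_of_isClosed isClosed_singleton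
    hs.isClosed (Set.disjoint_singleton_left.2 hx₀)
  exact ⟨toComplexC w, by simp [toComplexC, hw₀ (Set.mem_singleton x₀)],
    fun x hx => by simp [toComplexC, hw₁ hx]⟩

def NonUnitalStarAlgHom.toStarAlgHomOfMapOne {R A B : Type*} [CommSemiring R] [Semiring A]
    [Algebra R A] [Star A] [Semiring B] [Algebra R B] [Star B] (φ : A →⋆ₙₐ[R] B)
    (h : φ 1 = 1) : A →⋆ₐ[R] B where
  toFun := φ
  map_one' := h
  map_mul' := map_mul φ
  map_zero' := map_zero φ
  map_add' := map_add φ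
  commutes' c := by simp [Algebra.algebraMap_eq_smul_one, h]
  map_star' := map_star φ

section DiagRep

variable {X : Type*} [TopologicalSpace X] {n : ℕ}

lemma DiagRep.trace_eq_sum {β : C(X, ℂ) → Mat n} {z : Fin n → X} (h : DiagRep β z)
    (g : C(X, ℂ)) : (β g).trace = ∑ i, g (z i) := by
  obtain ⟨u, hu, hβ⟩ := h
  rw [hβ, Matrix.trace_mul_cycle, Unitary.star_mul_self_of_mem hu, one_mul, Matrix.trace_diagonal]

def unitaryDiagStarAlgHom (u : unitary (Mat n)) (z : Fin n → X) : C(X, ℂ) →⋆ₐ[ℂ] Mat n :=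
  (Unitary.conjStarAlgAut ℂ (Mat n) u : Mat n →⋆ₐ[ℂ] Mat n).comp
    { Matrix.diagonalAlgHom ℂ with
      map_star' := fun v => (Matrix.diagonal_conjTranspose v).symm } |>.comp
    { toFun := fun g i => g (z i)
      map_one' := rfl
      map_mul' := fun _ _ => rfl
      map_zero' := rfl
      map_add' := fun _ _ => rfl
      commutes' := fun _ => rfl
      map_star' := fun _ => rfl }

lemma unitaryDiagStarAlgHom_apply (u : unitary (Mat n)) (z : Fin n → X) (g : C(X, ℂ)) :
    unitaryDiagStarAlgHom u z g = u * Matrix.diagonal (fun i => g (z i)) * star (u : Mat n) :=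
  rfl

theorem ContinuousMap.starAlgHom_ext_of_injective [CompactSpace X] {A : Type*} [Ring A]
    [StarRing A] [Algebra ℂ A] [TopologicalSpace A] [T2Space A] {φ ψ : C(X, ℂ) →⋆ₐ[ℂ] A}
    (hφ : Continuous φ) (hψ : Continuous ψ) {f : C(X, ℂ)} (hf : Function.Injective f)
    (h : φ f = ψ f) : φ = ψ := by
  have hsep : (StarAlgebra.adjoin ℂ {f}).SeparatesPoints := fun x y hxy =>
    ⟨f, ⟨f, StarAlgebra.self_mem_adjoin_singleton ℂ f, rfl⟩, hf.ne hxy⟩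
  suffices (⊤ : StarSubalgebra ℂ C(X, ℂ)) ≤ StarAlgHom.equalizer φ ψ from
    StarAlgHom.ext fun g => this trivial
  rw [← ContinuousMap.starSubalgebra_topologicalClosure_eq_top_of_separatesPoints _ hsep]
  exact StarSubalgebra.topologicalClosure_minimal
    (StarAlgebra.adjoin_le (Set.singleton_subset_iff.2 h)) (isClosed_eq hφ hψ)

open scoped CStarAlgebra in
theorem exists_diagRep_of_injective [CompactSpace X] (Φ : C(X, ℂ) →⋆ₐ[ℂ] Mat n) {f : C(X, ℝ)}
    (hf : Function.Injective f) : ∃ z : Fin n → X, DiagRep Φ z := by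
  have hherm : (Φ (toComplexC f)).IsHermitian := by
    refine (IsSelfAdjoint.map ?_ Φ : IsSelfAdjoint _)
    ext x
    simp [toComplexC]
  have hspec : ∀ i, ∃ x, f x = hherm.eigenvalues i := by
    intro i
    have hmem : (hherm.eigenvalues i : ℂ) ∈ spectrum ℂ (toComplexC f) :=
      AlgHom.spectrum_apply_subset Φ.toAlgHom _
        (spectrum.algebraMap_mem ℂ (hherm.eigenvalues_mem_spectrum_real i))
    rw [ContinuousMap.spectrum_eq_range] at hmem
    obtain ⟨x, hx⟩ := hmem
    exact ⟨x, Complex.ofReal_injective hx⟩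
  choose z hz using hspec
  have hΦ : Φ = unitaryDiagStarAlgHom hherm.eigenvectorUnitary z := by
    refine ContinuousMap.starAlgHom_ext_of_injective (map_continuous Φ) (map_continuous _)
      (f := toComplexC f) (fun x y hxy => hf (Complex.ofReal_injective hxy)) ?_
    conv_lhs => rw [hherm.spectral_theorem]
    simp [unitaryDiagStarAlgHom_apply, toComplexC, hz, Function.comp_def]
  exact ⟨z, hherm.eigenvectorUnitary, hherm.eigenvectorUnitary.2, fun g => DFunLike.congr_fun hΦ g⟩

end DiagRep

section DimDropZero

variable {k : ℕ} {s₀ : ℝ} (hs : 0 ≤ s₀)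

abbrev iccLeft : Set.Icc (0 : ℝ) s₀ := ⟨0, Set.left_mem_Icc.2 hs⟩

variable (k) in
def scalarEmbZeroStarAlgHom : C(Set.Icc (0 : ℝ) s₀, ℂ) →⋆ₐ[ℂ] dimDropZero k hs where
  toFun := scalarEmbZero k hs
  map_one' := Subtype.ext <| ContinuousMap.ext fun t => by simp [scalarEmbZero]
  map_mul' g g' := Subtype.ext <| ContinuousMap.ext fun t => by
    simp [scalarEmbZero, smul_smul, mul_comm]
  map_zero' := Subtype.ext <| ContinuousMap.ext fun t => by simp [scalarEmbZero]
  map_add' g g' := Subtype.ext <| ContinuousMap.ext fun t => by simp [scalarEmbZero, add_smul]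
  commutes' c := Subtype.ext <| ContinuousMap.ext fun t => by
    simp [scalarEmbZero, Algebra.algebraMap_eq_smul_one]
  map_star' g := Subtype.ext <| ContinuousMap.ext fun t => by simp [scalarEmbZero]

def dimDropZero.single (g : C(Set.Icc (0 : ℝ) s₀, ℂ)) (hg : g (iccLeft hs) = 0) (i j : Fin k) :
    dimDropZero k hs :=
  ⟨⟨fun t => g t • Matrix.single i j 1, g.continuous.smul continuous_const⟩, 0, by simp [hg]⟩

namespace dimDropZero

variable {hs} {g h : C(Set.Icc (0 : ℝ) s₀, ℂ)} (hg : g (iccLeft hs) = 0) (hh : h (iccLeft hs) = 0)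

lemma single_mul_single (i j l : Fin k) :
    single hs g hg i j * single hs h hh j l = single hs (g * h) (by simp [hg]) i l :=
  Subtype.ext <| ContinuousMap.ext fun t => by simp [single]

lemma star_single (i j : Fin k) :
    star (single hs g hg i j) = single hs (star g) (by simp [hg]) j i :=
  Subtype.ext <| ContinuousMap.ext fun t => by
    simp [single, Matrix.star_eq_conjTranspose, Matrix.conjTranspose_single]

lemma single_sub (i j : Fin k) :
    single hs (g - h) (by simp [hg, hh]) i j = single hs g hg i j - single hs h hh i j :=
  Subtype.ext <| ContinuousMap.ext fun t => by simp [single, sub_smul]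

lemma sum_single_self : ∑ j, single hs g hg j j = scalarEmbZero k hs g :=
  Subtype.ext <| ContinuousMap.ext fun t => by
    simp [single, scalarEmbZero, Matrix.sum_single_eq_diagonal (fun _ => g t),
      Matrix.smul_one_eq_diagonal]

end dimDropZero
end DimDropZero

section Representation

open dimDropZero

variable {k r : ℕ} {s₀ : ℝ} {hs : 0 ≤ s₀} (α : dimDropZero k hs →⋆ₙₐ[ℂ] Mat r)
  {g h : C(Set.Icc (0 : ℝ) s₀, ℂ)} (hg : g (iccLeft hs) = 0)

lemma trace_map_single_mul_self_eq (hh : h (iccLeft hs) = 0) (i j : Fin k) :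
    (α (single hs (g * h) (by simp [hg]) i i)).trace =
      (α (single hs (g * h) (by simp [hg]) j j)).trace := by
  rw [← single_mul_single hg hh i j i, map_mul, Matrix.trace_mul_comm, ← map_mul,
    single_mul_single]
  simp only [mul_comm h g]

lemma natCast_mul_trace_map_single_mul (hh : h (iccLeft hs) = 0) (i : Fin k) :
    k * (α (single hs (g * h) (by simp [hg]) i i)).trace =
      (α (scalarEmbZero k hs (g * h))).trace := by
  rw [← sum_single_self (by simp [hg] : (g * h) (iccLeft hs) = 0), map_sum, Matrix.trace_sum,
    Finset.sum_congr rfl fun j _ => trace_map_single_mul_self_eq α hg hh j i]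
  simp

variable {α} {z : Fin r → Set.Icc (0 : ℝ) s₀} (hz : DiagRep (fun g => α (scalarEmbZero k hs g)) z)
include hz

open scoped ComplexOrder in
lemma map_single_eq_zero_of_forall_eq_zero (hg' : ∀ i, g (z i) = 0) (i j : Fin k) :
    α (single hs g hg i j) = 0 := by
  have hk : (k : ℂ) ≠ 0 := Nat.cast_ne_zero.2 i.pos.ne'
  rw [← Matrix.trace_conjTranspose_mul_self_eq_zero_iff, ← Matrix.star_eq_conjTranspose,
    ← map_star, star_single, ← map_mul, single_mul_single, ← mul_right_inj' hk,
    natCast_mul_trace_map_single_mul α (by simp [hg]) hg, hz.trace_eq_sum]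
  simp [hg']

theorem card_filter_eq_zero_modEq (hk : 0 < k) :
    (Finset.univ.filter fun i => (z i : ℝ) = 0).card ≡ r [MOD k] := by
  let i₀ : Fin k := ⟨0, hk⟩
  obtain ⟨w, hw₀, hw₁⟩ := exists_continuousMap_eq_zero_eqOn_one
    ((Set.finite_range z).sdiff (t := {iccLeft hs})) fun h => h.2 rfl
  have hwz : ∀ i, w (z i) = if ¬(z i : ℝ) = 0 then 1 else 0 := by
    intro i
    split_ifs with hi
    · rw [show z i = iccLeft hs from Subtype.ext hi, hw₀]
    · exact hw₁ ⟨Set.mem_range_self i, fun h => hi (congrArg Subtype.val h)⟩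
  set P := α (single hs (w * w) (by simp [hw₀]) i₀ i₀)
  have hP : α (single hs w hw₀ i₀ i₀) = P := by
    rw [← sub_eq_zero, ← map_sub, ← single_sub]
    refine map_single_eq_zero_of_forall_eq_zero _ hz (fun i => ?_) i₀ i₀
    simp only [ContinuousMap.sub_apply, ContinuousMap.mul_apply, hwz]
    split_ifs <;> simp
  have hPidem : IsIdempotentElem P := by
    rw [IsIdempotentElem, ← hP, ← map_mul, single_mul_single]
    exact hP.symm
  obtain ⟨n, hn⟩ := Matrix.exists_trace_eq_natCast_of_isIdempotentElem hPidem
  have hcard : (Finset.univ.filter fun i => ¬(z i : ℝ) = 0).card = k * n := by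
    have hww : ∀ i, (w * w) (z i) = w (z i) := fun i => by
      rw [ContinuousMap.mul_apply, hwz]; split_ifs <;> simp
    have htr : (k : ℂ) * P.trace = _ := natCast_mul_trace_map_single_mul α hw₀ hw₀ i₀
    rw [hz.trace_eq_sum, hn] at htr
    simp only [hww, hwz, Finset.sum_boole] at htr
    exact_mod_cast htr.symm
  calc _ ≡ _ + k * n [MOD k] := (Nat.add_mul_mod_self_left _ k n).symm
    _ = r := by
      rw [← hcard, Finset.card_filter_add_card_filter_not, Finset.card_univ, Fintype.card_fin]

end Representation

theorem stmt3_general (k r : ℕ) (hk : 1 ≤ k) (s₀ : ℝ) (hs : 0 < s₀)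
    (α : ↥(dimDropZero k hs.le) →⋆ₙₐ[ℂ] Mat r) (hα : α 1 = 1) :
    (∃ z : Fin r → ↥(Set.Icc (0:ℝ) s₀),
        DiagRep (fun g => α (scalarEmbZero k hs.le g)) z) ∧
    ∀ z : Fin r → ↥(Set.Icc (0:ℝ) s₀),
      DiagRep (fun g => α (scalarEmbZero k hs.le g)) z →
      (Finset.univ.filter fun i => ((z i : ℝ) = 0)).card ≡ r [MOD k] := by
  let αTilde := (α.comp (scalarEmbZeroStarAlgHom k hs.le).toNonUnitalStarAlgHom)
    |>.toStarAlgHomOfMapOne (by simpa using hα)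
  exact ⟨exists_diagRep_of_injective αTilde (f := ⟨Subtype.val, continuous_subtype_val⟩)
    Subtype.val_injective, fun z hz => card_filter_eq_zero_modEq hz hk⟩

/-- For a unital homomorphism `α : I_k|_{[0,s₀]} → M_r(ℂ)`, the multiplicity of `0` in the
spectrum of `α̃ = α ∘ ι : C[0,s₀] → M_r(ℂ)` is congruent to `r` modulo `k`. -/
theorem stmt3 (k r : ℕ) (hk : 1 ≤ k) (s₀ : ℝ) (hs : 0 < s₀) (hs1 : s₀ ≤ 1)
    (α : ↥(dimDropZero k hs.le) →⋆ₙₐ[ℂ] Mat r) (hα : α 1 = 1) :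
    (∃ z : Fin r → ↥(Set.Icc (0:ℝ) s₀),
        DiagRep (fun g => α (scalarEmbZero k hs.le g)) z) ∧
    ∀ z : Fin r → ↥(Set.Icc (0:ℝ) s₀),
      DiagRep (fun g => α (scalarEmbZero k hs.le g)) z →
      (Finset.univ.filter fun i => ((z i : ℝ) = 0)).card ≡ r [MOD k] :=
  stmt3_general k r hk s₀ hs α hα
end
end

section
/- Let X be a connected finite simplicial complex, F ⊂ C(X) a finite set which generates C(X) as a C*-algebra, η > 0, and n a positive integer. Then there is δ > 0 such that for any two unital homomorphisms φ, ψ: C(X) → M_n(ℂ), if ‖φ(f) − ψ(f)‖ < δ for all f ∈ F, then Sp(φ) and Sp(ψ) can be paired within η. -/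
noncomputable section

open scoped Matrix.Norms.L2Operator Kronecker
open Matrix

/-!
Star homomorphisms between C⋆-algebras are contractive, so approximate agreement of `φ` and `ψ`
on `F` propagates, uniformly in `φ` and `ψ`, to the star algebra generated by `F` and then to its
closure, which is all of `C(X)`. Fix a finite `η/3`-net `Z` of `X` and, for each `T ⊆ Z`, an
Urysohn function equal to `1` within `η/3` of `T` and to `0` beyond `2η/3`. Taking traces, its
sums over `Sp φ` and `Sp ψ` differ by less than `1` once `δ` is small; for `T` the net points
near a set `S` of points of `Sp φ`, this says that at least `|S|` points of `Sp ψ` lie within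
`η` of `S`, and Hall's marriage theorem turns this into a pairing.
-/

open Filter Topology Metric Finset

section ApproxDetermined

variable {A : Type*} (B : Type*) [CStarAlgebra A] [CStarAlgebra B]

def approxDetermined (F : Set A) : StarSubalgebra ℂ A where
  carrier := {a | ∀ ε > 0, ∀ᶠ δ in 𝓝[>] (0 : ℝ), ∀ φ ψ : A →⋆ₐ[ℂ] B,
    (∀ f ∈ F, ‖φ f - ψ f‖ < δ) → ‖φ a - ψ a‖ < ε}
  mul_mem' {a b} ha hb ε hε := by
    set ε' := ε / (‖a‖ + ‖b‖ + 1)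
    have hε' : 0 < ε' := by positivity
    filter_upwards [ha ε' hε', hb ε' hε'] with δ hδa hδb φ ψ hδ
    have hε'_mul : (‖a‖ + ‖b‖ + 1) * ε' = ε := mul_div_cancel₀ _ (by positivity)
    calc ‖φ (a * b) - ψ (a * b)‖ = ‖φ a * (φ b - ψ b) + (φ a - ψ a) * ψ b‖ := by
          simp only [map_mul, mul_sub, sub_mul, sub_add_sub_cancel]
      _ ≤ ‖a‖ * ‖φ b - ψ b‖ + ‖φ a - ψ a‖ * ‖b‖ := by
          refine (norm_add_le _ _).trans (add_le_add ?_ ?_)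
          · exact (norm_mul_le _ _).trans (by gcongr; exact NonUnitalStarAlgHom.norm_apply_le φ a)
          · exact (norm_mul_le _ _).trans (by gcongr; exact NonUnitalStarAlgHom.norm_apply_le ψ b)
      _ ≤ ‖a‖ * ε' + ε' * ‖b‖ := by
          gcongr
          exacts [(hδb φ ψ hδ).le, (hδa φ ψ hδ).le]
      _ < ε := by nlinarith
  add_mem' {a b} ha hb ε hε := by
    filter_upwards [ha (ε / 2) (by positivity), hb (ε / 2) (by positivity)] with δ hδa hδb φ ψ hδ
    calc ‖φ (a + b) - ψ (a + b)‖ = ‖(φ a - ψ a) + (φ b - ψ b)‖ := by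
          rw [map_add, map_add, add_sub_add_comm]
      _ ≤ ‖φ a - ψ a‖ + ‖φ b - ψ b‖ := norm_add_le _ _
      _ < ε / 2 + ε / 2 := add_lt_add (hδa φ ψ hδ) (hδb φ ψ hδ)
      _ = ε := add_halves ε
  algebraMap_mem' r ε hε := .of_forall fun _ φ ψ _ => by simpa [AlgHomClass.commutes] using hε
  star_mem' {a} ha ε hε := by
    filter_upwards [ha ε hε] with δ hδ φ ψ hφψ
    simpa only [map_star, ← star_sub, norm_star] using hδ φ ψ hφψ

variable {B}

lemma subset_approxDetermined (F : Set A) : F ⊆ approxDetermined B F := fun f hf ε hε => by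
  filter_upwards [Ioo_mem_nhdsGT hε] with δ hδ φ ψ hφψ
  exact (hφψ f hf).trans hδ.2

lemma isClosed_approxDetermined (F : Set A) : IsClosed (approxDetermined B F : Set A) := by
  refine isClosed_of_closure_subset fun a ha ε hε => ?_
  obtain ⟨b, hb, hab⟩ := Metric.mem_closure_iff.1 ha (ε / 3) (by positivity)
  filter_upwards [hb (ε / 3) (by positivity)] with δ hδ φ ψ hφψ
  rw [dist_eq_norm] at hab
  calc ‖φ a - ψ a‖ = ‖φ (a - b) + (φ b - ψ b) + ψ (b - a)‖ := by
        simp only [map_sub]; congr 1; abel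
    _ ≤ ‖a - b‖ + ‖φ b - ψ b‖ + ‖b - a‖ := by
        refine (norm_add₃_le).trans (add_le_add (add_le_add ?_ le_rfl) ?_)
        exacts [NonUnitalStarAlgHom.norm_apply_le φ _, NonUnitalStarAlgHom.norm_apply_le ψ _]
    _ < ε / 3 + ε / 3 + ε / 3 := by
        rw [norm_sub_rev b a]; gcongr; exact hδ φ ψ hφψ
    _ = ε := by ring

lemma mem_approxDetermined_of_dense {F : Set A}
    (hF : (StarAlgebra.adjoin ℂ F).topologicalClosure = ⊤) (a : A) : a ∈ approxDetermined B F :=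
  StarSubalgebra.topologicalClosure_minimal (StarAlgebra.adjoin_le (subset_approxDetermined F))
    (isClosed_approxDetermined F) (hF ▸ StarSubalgebra.mem_top)

end ApproxDetermined

section Pairing

variable {α ι : Type*} [PseudoMetricSpace α] [Fintype ι]

theorem pairedWithin_of_card_le {x y : ι → α} {η : ℝ}
    (h : ∀ S : Finset ι, #S ≤ #{j | ∃ i ∈ S, dist (x i) (y j) < η}) : PairedWithin x y η := by
  classical
  obtain ⟨σ, hσ, hdist⟩ := (Fintype.all_card_le_filter_rel_iff_exists_injective _).1 h
  exact ⟨Equiv.ofBijective σ hσ.bijective_of_finite, hdist⟩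

lemma card_le_sum_of_eq_one {g : ι → ℝ} (hg : ∀ i, 0 ≤ g i) {S : Finset ι}
    (hS : ∀ i ∈ S, g i = 1) : (#S : ℝ) ≤ ∑ i, g i :=
  calc (#S : ℝ) = ∑ i ∈ S, g i := by rw [sum_congr rfl hS]; simp
    _ ≤ ∑ i, g i := sum_le_sum_of_subset_of_nonneg (subset_univ S) fun i _ _ => hg i

lemma sum_le_card_filter_ne_zero [DecidableEq ι] {g : ι → ℝ} (hg : ∀ i, g i ≤ 1) :
    ∑ i, g i ≤ #{i | g i ≠ 0} :=
  calc ∑ i, g i = ∑ i with g i ≠ 0, g i := (sum_filter_ne_zero _).symm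
    _ ≤ #{i | g i ≠ 0} := by simpa using sum_le_card_nsmul _ g 1 fun i _ => hg i

theorem pairedWithin_of_forall_sum_lt_sum_add_one {Z : Finset α} {r s : ℝ}
    (hZ : ∀ p, ∃ z ∈ Z, dist p z < r) {g : Finset α → α → ℝ} (hg : ∀ T p, g T p ∈ Set.Icc 0 1)
    (hg_one : ∀ T, Set.EqOn (g T) 1 (cthickening r T))
    (hg_zero : ∀ T, Set.EqOn (g T) 0 (thickening s T)ᶜ)
    {x y : ι → α} (hxy : ∀ T ⊆ Z, ∑ i, g T (x i) < ∑ j, g T (y j) + 1) :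
    PairedWithin x y (r + s) := by
  classical
  refine pairedWithin_of_card_le fun S => ?_
  set T := Z.filter fun z => ∃ i ∈ S, dist (x i) z < r
  have hS : (#S : ℝ) ≤ ∑ i, g T (x i) := by
    refine card_le_sum_of_eq_one (fun i => (hg T _).1) fun i hi => hg_one T ?_
    obtain ⟨z, hz, hxz⟩ := hZ (x i)
    exact mem_cthickening_of_dist_le _ z _ _ (mem_filter.2 ⟨hz, i, hi, hxz⟩) hxz.le
  have hsupp : ({j | g T (y j) ≠ 0} : Finset ι) ⊆
      ({j | ∃ i ∈ S, dist (x i) (y j) < r + s} : Finset ι) := by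
    intro j hj
    simp only [mem_filter, mem_univ, true_and] at hj ⊢
    obtain ⟨z, hzT, hyz⟩ := mem_thickening_iff.1 (not_not.1 fun h => hj (hg_zero T h))
    obtain ⟨-, i, hi, hxz⟩ := mem_filter.1 hzT
    exact ⟨i, hi, (dist_triangle_right _ _ z).trans_lt (add_lt_add hxz hyz)⟩
  have hy : ∑ j, g T (y j) ≤ #{j | ∃ i ∈ S, dist (x i) (y j) < r + s} :=
    (sum_le_card_filter_ne_zero fun j => (hg T (y j)).2).trans (mod_cast card_le_card hsupp)
  have := (hS.trans_lt (hxy T (filter_subset _ _))).trans_le (add_le_add_left hy 1)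
  exact Nat.lt_add_one_iff.1 (mod_cast this)

lemma exists_finset_forall_dist_lt [CompactSpace α] {r : ℝ} (hr : 0 < r) :
    ∃ Z : Finset α, ∀ p, ∃ z ∈ Z, dist p z < r := by
  obtain ⟨t, -, ht, hcover⟩ := (isCompact_univ : IsCompact (Set.univ : Set α)).finite_cover_balls hr
  exact ⟨ht.toFinset, fun p => by simpa using hcover (Set.mem_univ p)⟩

lemma exists_plateau (T : Set α) {r s : ℝ} (hs : 0 < s) (hrs : r < s) :
    ∃ g : C(α, ℝ), Set.EqOn g 0 (thickening s T)ᶜ ∧ Set.EqOn g 1 (cthickening r T) ∧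
      ∀ p, g p ∈ Set.Icc 0 1 :=
  exists_continuous_zero_one_of_isClosed isOpen_thickening.isClosed_compl isClosed_cthickening
    (Set.disjoint_compl_left_iff_subset.2 (cthickening_subset_thickening' hs hrs T))

end Pairing

namespace Matrix

variable {𝕜 m n : Type*} [RCLike 𝕜] [Fintype m] [Fintype n] [DecidableEq n]

lemma norm_entry_le_l2_opNorm (A : Matrix m n 𝕜) (i : m) (j : n) : ‖A i j‖ ≤ ‖A‖ := by
  have h := A.l2_opNorm_mulVec (EuclideanSpace.single j 1)
  rw [PiLp.norm_single, norm_one, mul_one] at h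
  refine le_of_eq_of_le ?_ ((PiLp.norm_apply_le _ i).trans h)
  simp [mulVec_single]

lemma norm_trace_le_card_mul_l2_opNorm (A : Matrix n n 𝕜) :
    ‖A.trace‖ ≤ Fintype.card n * ‖A‖ :=
  calc ‖A.trace‖ ≤ ∑ i, ‖A i i‖ := norm_sum_le _ _
    _ ≤ ∑ _i : n, ‖A‖ := Finset.sum_le_sum fun i _ => A.norm_entry_le_l2_opNorm i i
    _ = Fintype.card n * ‖A‖ := by simp

end Matrix

lemma DiagRep.trace_eq {Z ι : Type*} [TopologicalSpace Z] [Fintype ι] [DecidableEq ι]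
    {β : C(Z, ℂ) → Matrix ι ι ℂ} {x : ι → Z} (h : DiagRep β x) (g : C(Z, ℂ)) :
    (β g).trace = ∑ i, g (x i) := by
  obtain ⟨u, hu, hβ⟩ := h
  rw [hβ, trace_mul_cycle, Unitary.star_mul_self_of_mem hu, one_mul, trace_diagonal]

lemma DiagRep.sum_sub_sum_le {Z ι : Type*} [TopologicalSpace Z] [Fintype ι] [DecidableEq ι]
    {β γ : C(Z, ℂ) → Matrix ι ι ℂ} {x y : ι → Z} (hx : DiagRep β x) (hy : DiagRep γ y)
    (g : C(Z, ℝ)) :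
    ∑ i, g (x i) - ∑ j, g (y j) ≤ Fintype.card ι * ‖β (toComplexC g) - γ (toComplexC g)‖ :=
  calc ∑ i, g (x i) - ∑ j, g (y j) = (β (toComplexC g) - γ (toComplexC g)).trace.re := by
        simp [trace_sub, hx.trace_eq, hy.trace_eq, toComplexC]
    _ ≤ ‖(β (toComplexC g) - γ (toComplexC g)).trace‖ := Complex.re_le_norm _
    _ ≤ _ := norm_trace_le_card_mul_l2_opNorm _

theorem stmt9_general (X : Type) [MetricSpace X] [CompactSpace X]
    (F : Set C(X, ℂ))
    (hgen : (StarAlgebra.adjoin ℂ F).topologicalClosure = ⊤)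
    (η : ℝ) (hη : 0 < η) (n : ℕ) :
    ∃ δ > (0:ℝ), ∀ φ ψ : C(X, ℂ) →⋆ₐ[ℂ] Mat n,
      (∀ f ∈ F, ‖φ f - ψ f‖ < δ) →
      ∀ x y : Fin n → X, DiagRep (fun f => φ f) x → DiagRep (fun f => ψ f) y →
        PairedWithin x y η := by
  classical
  obtain ⟨Z, hZ⟩ := exists_finset_forall_dist_lt (α := X) (by positivity : 0 < η / 3)
  have hplateau (T : Finset X) := exists_plateau (T : Set X) (by positivity : 0 < 2 * η / 3)
    (by linarith : η / 3 < 2 * η / 3)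
  choose g hg_zero hg_one hg using hplateau
  have hdet (T : Finset X) :=
    mem_approxDetermined_of_dense (B := Mat n) hgen (toComplexC (g T)) (1 / (n + 1)) (by positivity)
  obtain ⟨δ, hδ, hδpos⟩ :=
    ((Z.powerset.eventually_all.2 fun T _ => hdet T).and eventually_mem_nhdsWithin).exists
  refine ⟨δ, hδpos, fun φ ψ hφψ x y hx hy => ?_⟩
  have hsum : ∀ T ⊆ Z, ∑ i, g T (x i) < ∑ j, g T (y j) + 1 := fun T hT => by
    have hclose := hδ T (mem_powerset.2 hT) φ ψ hφψ
    have hle := hx.sum_sub_sum_le hy (g T)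
    rw [Fintype.card_fin] at hle
    rw [lt_div_iff₀ (by positivity)] at hclose
    linarith [norm_nonneg (φ (toComplexC (g T)) - ψ (toComplexC (g T)))]
  simpa [show η / 3 + 2 * η / 3 = η by ring] using
    pairedWithin_of_forall_sum_lt_sum_add_one (Z := Z) hZ hg hg_one hg_zero hsum

/-- If two unital homomorphisms `φ, ψ : C(X) → M_n(ℂ)` are `δ`-close on a finite generating
set, then their spectra can be paired within `η` (for suitable `δ` depending on
`X, F, η, n`). -/
theorem stmt9 (X : Type) [MetricSpace X] [CompactSpace X] [ConnectedSpace X]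
    (hX : FinComplex X)
    (F : Set C(X, ℂ)) (hF : F.Finite)
    (hgen : (StarAlgebra.adjoin ℂ F).topologicalClosure = ⊤)
    (η : ℝ) (hη : 0 < η) (n : ℕ) (hn : 0 < n) :
    ∃ δ > (0:ℝ), ∀ φ ψ : C(X, ℂ) →⋆ₐ[ℂ] Mat n,
      (∀ f ∈ F, ‖φ f - ψ f‖ < δ) →
      ∀ x y : Fin n → X, DiagRep (fun f => φ f) x → DiagRep (fun f => ψ f) y →
        PairedWithin x y η :=
  stmt9_general X F hgen η hη n
end
end

section
/- Let X = X₁ ∨ X₂ ∨ … ∨ X_k be a wedge (bunch) of k intervals X_i = [0,1] joined at a common point, and let Y = [0,1]. Suppose X⁰ = {x₁⁰, x₂⁰, …, x_l⁰} ⊂ X and X¹ = {x₁¹, x₂¹, …, x_l¹} ⊂ X are two l-element multisets with x_i¹ ≠ x_j¹ whenever i ≠ j. Then there are l continuous functions f₁, f₂, …, f_l: Y → X such that: (1) as multisets, {f₁(0), f₂(0), …, f_l(0)} = X⁰ and {f₁(1), f₂(1), …, f_l(1)} = X¹; and (2) for each t ∈ (0,1] and each pair i ≠ j, f_i(t) ≠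 f_j(t). -/
noncomputable section

open scoped Matrix.Norms.L2Operator Kronecker
open Matrix

/-- The wedge (one-point union) of `k` unit intervals, glued at the left endpoints. -/
def wedgeSetoid (k : ℕ) : Setoid (Fin k × unitInterval) where
  r a b := a = b ∨ (a.2 = 0 ∧ b.2 = 0)
  iseqv := by
    refine ⟨fun _ => Or.inl rfl, ?_, ?_⟩
    · rintro a b (rfl | ⟨h1, h2⟩)
      · exact Or.inl rfl
      · exact Or.inr ⟨h2, h1⟩
    · rintro a b c (rfl | ⟨h1, h2⟩) (rfl | ⟨h3, h4⟩)
      · exact Or.inl rfl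
      · exact Or.inr ⟨h3, h4⟩
      · exact Or.inr ⟨h1, h2⟩
      · exact Or.inr ⟨h1, h4⟩

/-- The wedge `X₁ ∨ ⋯ ∨ X_k` of `k` copies of `[0,1]`. -/
def Wedge (k : ℕ) : Type := Quotient (wedgeSetoid k)

instance (k : ℕ) : TopologicalSpace (Wedge k) :=
  inferInstanceAs (TopologicalSpace (Quotient (wedgeSetoid k)))

/-!
Glue branch `b₀` of the wedge to any other branch `c` to get a copy of `[-1, 1]`, with branch `c`
on the negative side. Every point lies on such a line, and on it a point is determined by its
signed coordinate. Move each point linearly along its line to one of the `l` positions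
`(r + 1) / l` of branch `b₀`, handing out the positions in the order of the signed coordinates:
at every positive time distinct paths then have distinct signed coordinates, hence distinct values.
Doing this for `X⁰` and for `X¹` and following the first family by the reverse of the second
gives the required paths; at time `1` they are distinct because `X¹` is.
-/

section

open Set unitInterval

theorem Tuple.apply_le_apply_of_sort_symm_lt {n : ℕ} {α : Type*} [LinearOrder α]
    (f : Fin n → α) {i j : Fin n} (h : (Tuple.sort f).symm i < (Tuple.sort f).symm j) :
    f i ≤ f j := by
  simpa using Tuple.monotone_sort f h.le

theorem Path.pairwise_ne_trans_symm {X ι : Type*} [TopologicalSpace X] {a b c : ι → X}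
    (γ : ∀ i, Path (a i) (c i)) (δ : ∀ i, Path (b i) (c i)) (hb : Function.Injective b)
    (hγ : ∀ t : I, t ≠ 0 → Pairwise fun i j => γ i t ≠ γ j t)
    (hδ : ∀ t : I, t ≠ 0 → Pairwise fun i j => δ i t ≠ δ j t) (t : I) (ht : t ≠ 0) :
    Pairwise fun i j => (γ i).trans (δ i).symm t ≠ (γ j).trans (δ j).symm t := by
  intro i j hij
  simp only [Path.trans_apply, Path.symm_apply, Function.comp_apply]
  split_ifs with hhalf
  · refine hγ _ (fun h0 => ht ?_) hij
    ext
    simpa using congrArg Subtype.val h0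
  · generalize σ _ = s
    by_cases hs : s = 0
    · rw [hs, (δ i).source, (δ j).source]
      exact hb.ne hij
    · exact hδ s hs hij

namespace Wedge

variable {k : ℕ}

/-- The point at distance `s` from the base point on branch `b`; `s` is clamped to `[0, 1]`. -/
def mk (b : Fin k) (s : ℝ) : Wedge k :=
  Quotient.mk (wedgeSetoid k) (b, projIcc 0 1 zero_le_one s)

theorem continuous_mk (b : Fin k) : Continuous (mk b) :=
  continuous_quot_mk.comp (continuous_const.prodMk continuous_projIcc)

theorem mk_eq_mk_iff {b b' : Fin k} {s s' : ℝ} (hs : s ∈ Icc (0 : ℝ) 1)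
    (hs' : s' ∈ Icc (0 : ℝ) 1) : mk b s = mk b' s' ↔ s = s' ∧ (b = b' ∨ s = 0) := by
  refine Quotient.eq.trans ?_
  change (_ = _ ∨ (_ = 0 ∧ _ = 0)) ↔ _
  rw [projIcc_of_mem _ hs, projIcc_of_mem _ hs', Prod.mk.injEq]
  simp only [Subtype.ext_iff, Icc.coe_zero]
  grind

theorem mk_zero (b b' : Fin k) : mk b 0 = mk b' 0 :=
  (mk_eq_mk_iff (left_mem_Icc.2 zero_le_one) (left_mem_Icc.2 zero_le_one)).2 ⟨rfl, Or.inr rfl⟩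

/-- The union of the branches `b₀` and `c` parametrized by `[-1, 1]`, with branch `c` on the
negative side (if `c = b₀` the negative side folds back onto branch `b₀`). -/
def linePt (b₀ c : Fin k) (y : ℝ) : Wedge k :=
  if 0 ≤ y then mk b₀ y else mk c (-y)

theorem continuous_linePt (b₀ c : Fin k) : Continuous (linePt b₀ c) :=
  (continuous_mk b₀).if_le ((continuous_mk c).comp continuous_neg) continuous_const
    continuous_id fun y hy => by rw [← hy, neg_zero]; exact mk_zero b₀ c

theorem linePt_of_nonneg (b₀ c : Fin k) {y : ℝ} (hy : 0 ≤ y) : linePt b₀ c y = mk b₀ y :=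
  if_pos hy

theorem eq_of_linePt_eq {b₀ c c' : Fin k} {y y' : ℝ} (hy : y ∈ Icc (-1 : ℝ) 1)
    (hy' : y' ∈ Icc (-1 : ℝ) 1) (hc : c = b₀ → 0 ≤ y) (hc' : c' = b₀ → 0 ≤ y')
    (h : linePt b₀ c y = linePt b₀ c' y') : y = y' := by
  unfold linePt at h
  split_ifs at h with h0 h0' h0'
  · exact ((mk_eq_mk_iff ⟨h0, hy.2⟩ ⟨h0', hy'.2⟩).1 h).1
  · obtain ⟨hyy, rfl | rfl⟩ := (mk_eq_mk_iff ⟨h0, hy.2⟩ ⟨by linarith, by linarith [hy'.1]⟩).1 h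
    · linarith [hc' rfl]
    · linarith
  · obtain ⟨hyy, rfl | hz⟩ := (mk_eq_mk_iff ⟨by linarith, by linarith [hy.1]⟩ ⟨h0', hy'.2⟩).1 h
    · linarith [hc rfl]
    · linarith
  · linarith [((mk_eq_mk_iff ⟨by linarith, by linarith [hy.1]⟩
      ⟨by linarith, by linarith [hy'.1]⟩).1 h).1]

theorem exists_linePt_eq (b₀ : Fin k) (x : Wedge k) :
    ∃ c y, y ∈ Icc (-1 : ℝ) 1 ∧ (c = b₀ → 0 ≤ y) ∧ linePt b₀ c y = x := by
  induction x using Quotient.inductionOn with | h p => ?_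
  obtain ⟨b, u, hu₀, hu₁⟩ := p
  have hmk : Quotient.mk (wedgeSetoid k) (b, ⟨u, hu₀, hu₁⟩) = mk b u := by
    rw [mk, projIcc_of_mem _ ⟨hu₀, hu₁⟩]
  rw [hmk]
  by_cases hb : b = b₀
  · subst hb
    exact ⟨b, u, ⟨by linarith, hu₁⟩, fun _ => hu₀, linePt_of_nonneg _ _ hu₀⟩
  refine ⟨b, -u, ⟨by linarith, by linarith⟩, fun h => absurd h hb, ?_⟩
  rcases hu₀.eq_or_lt with rfl | hu
  · rw [neg_zero, linePt_of_nonneg _ _ le_rfl, mk_zero]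
  · rw [linePt, if_neg (by linarith), neg_neg]

def slot {l : ℕ} (r : Fin l) : ℝ := ((r : ℕ) + 1) / l

theorem slot_mem_Ioc {l : ℕ} (r : Fin l) : slot r ∈ Ioc (0 : ℝ) 1 := by
  have hl : (0 : ℝ) < l := by exact_mod_cast r.pos
  have hr : ((r : ℕ) : ℝ) + 1 ≤ l := by exact_mod_cast r.isLt
  exact ⟨by unfold slot; positivity, (div_le_one hl).2 hr⟩

theorem slot_strictMono {l : ℕ} : StrictMono (slot : Fin l → ℝ) := fun r r' h => by
  have hl : (0 : ℝ) < l := by exact_mod_cast r.pos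
  have h' : ((r : ℕ) : ℝ) < r' := by exact_mod_cast h
  exact div_lt_div_of_pos_right (by linarith) hl

theorem exists_paths_to_slots {l : ℕ} (b₀ : Fin k) (x : Fin l → Wedge k) :
    ∃ (e : Equiv.Perm (Fin l)) (γ : ∀ i, Path (x i) (mk b₀ (slot (e i)))),
      ∀ t : I, t ≠ 0 → Pairwise fun i j => γ i t ≠ γ j t := by
  choose c y hy hc hx using fun i => exists_linePt_eq b₀ (x i)
  set e := (Tuple.sort y).symm
  have hslot : ∀ i, slot (e i) ∈ Ioc (0 : ℝ) 1 := fun i => slot_mem_Ioc (e i)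
  let γ : ∀ i, Path (x i) (mk b₀ (slot (e i))) := fun i =>
    ((Path.segment (y i) (slot (e i))).map (continuous_linePt b₀ (c i))).cast (hx i).symm
      (linePt_of_nonneg b₀ (c i) (hslot i).1.le).symm
  set z : I → Fin l → ℝ := fun t i => AffineMap.lineMap (y i) (slot (e i)) (t : ℝ)
  have hz : ∀ t i, z t i ∈ Icc (-1 : ℝ) 1 := fun t i =>
    (convex_Icc _ _).lineMap_mem (hy i) ⟨by linarith [(hslot i).1], (hslot i).2⟩ t.2
  have hzc : ∀ t i, c i = b₀ → 0 ≤ z t i := fun t i h =>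
    (convex_Ici (0 : ℝ)).lineMap_mem (hc i h) (hslot i).1.le t.2
  have hz_lt : ∀ t : I, t ≠ 0 → ∀ i j, e i < e j → z t i < z t j := fun t ht i j h =>
    (lineMap_mono_left (Tuple.apply_le_apply_of_sort_symm_lt y h) t.2.2).trans_lt
      (lineMap_strict_mono_right (slot_strictMono h) (coe_pos.2 (pos_iff_ne_zero.2 ht)))
  refine ⟨e, γ, fun t ht i j hij hγ => ?_⟩
  have hzz : z t i = z t j := eq_of_linePt_eq (hz t i) (hz t j) (hzc t i) (hzc t j) hγ
  rcases (e.injective.ne hij).lt_or_gt with hlt | hlt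
  · exact (hz_lt t ht i j hlt).ne hzz
  · exact (hz_lt t ht j i hlt).ne' hzz

end Wedge

end

/-- Given two `l`-element multisets `X⁰, X¹` in a wedge of `k` intervals, with `X¹`
consisting of distinct points, there are `l` continuous paths `f_i : [0,1] → X` starting
at `X⁰` and ending at `X¹` (as multisets) which are pairwise disjoint at every `t ∈ (0,1]`. -/
theorem stmt14 (k l : ℕ) (hk : 1 ≤ k)
    (x0 x1 : Fin l → Wedge k) (hx1 : Function.Injective x1) :
    ∃ f : Fin l → C(unitInterval, Wedge k),
      (∃ σ : Equiv.Perm (Fin l), ∀ i, f i 0 = x0 (σ i)) ∧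
      (∃ τ : Equiv.Perm (Fin l), ∀ i, f i 1 = x1 (τ i)) ∧
      ∀ t : unitInterval, t ≠ 0 → ∀ i j, i ≠ j → f i t ≠ f j t := by
  obtain ⟨e₀, γ, hγ⟩ := Wedge.exists_paths_to_slots ⟨0, hk⟩ x0
  obtain ⟨e₁, δ, hδ⟩ := Wedge.exists_paths_to_slots ⟨0, hk⟩ x1
  set π := e₀.trans e₁.symm
  let δ' : ∀ i, Path (x1 (π i)) (Wedge.mk ⟨0, hk⟩ (Wedge.slot (e₀ i))) := fun i =>
    (δ (π i)).cast rfl (by simp [π])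
  refine ⟨fun i => (γ i).trans (δ' i).symm, ⟨1, fun i => ((γ i).trans (δ' i).symm).source⟩,
    ⟨π, fun i => ((γ i).trans (δ' i).symm).target⟩, fun t ht => ?_⟩
  exact Path.pairwise_ne_trans_symm γ δ' (hx1.comp π.injective) hγ
    (fun s hs i j hij => hδ s hs (π.injective.ne hij)) t ht
end
end
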